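/- arXiv:1511.04261 — 4 statements merged into one kernel-verified Lean document; each statement's English description precedes it below -/
import Mathlib

section
/- Define two kinds of operations on finite sets of real numbers: for p ∈ ℝ, the operation insert_p sends a finite set Y to Y ∪ {p}; the operation serve sends a nonempty finite set Y to Y \ {max Y} and sends the empty set to itself. Then for every finite list of such operations (each entry either insert_p for some p ∈ ℝ, or serve) and all finite sets s ⊆ t of real numbers, applying the operations of the list in order to s and to t yields sets s' and t' with s' ⊆ t'. -/
/-- The `serve` operation: remove the task with the highest priority from
a nonempty finite set of priorities; the empty set is left unchanged. -/
noncomputable def serve (Y : Finset ℝ) : Finset ℝ :=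
  if h : Y.Nonempty then Y.erase (Y.max' h) else ∅

/-- An operation on queue states: `some p` is the insertion of a task with
priority `p`, and `none` is the `serve` operation. -/
noncomputable def applyOp (op : Option ℝ) (Y : Finset ℝ) : Finset ℝ :=
  match op with
  | some p => insert p Y
  | none => serve Y

lemma serve_mono {s t : Finset ℝ} (hst : s ⊆ t) : serve s ⊆ serve t := by
  unfold serve
  by_cases hs : s.Nonempty
  · have ht : t.Nonempty := hs.mono hst
    simp only [dif_pos hs, dif_pos ht]
    intro x hx
    rw [Finset.mem_erase] at hx ⊢
    have hxs := hx.2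
    have hlt : x < s.max' hs := lt_of_le_of_ne (Finset.le_max' s x hxs) hx.1
    have hle : s.max' hs ≤ t.max' ht := Finset.le_max' t _ (hst (s.max'_mem hs))
    exact ⟨ne_of_lt (hlt.trans_le hle), hst hxs⟩
  · simp [dif_neg hs]

lemma applyOp_mono (op : Option ℝ) {s t : Finset ℝ} (hst : s ⊆ t) :
    applyOp op s ⊆ applyOp op t := by
  cases op with
  | some p => exact Finset.insert_subset_insert p hst
  | none => exact serve_mono hst

/-- Applying any finite list of operations (each either the
insertion of some priority `p`, or serving the task with the highest
priority) in order to two finite sets `s ⊆ t` of reals yields sets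
`s' ⊆ t'`: the inbox dynamics are monotone with respect to inclusion. -/
theorem applyOps_mono (ops : List (Option ℝ)) (s t : Finset ℝ) (hst : s ⊆ t) :
    ops.foldl (fun Y op => applyOp op Y) s ⊆ ops.foldl (fun Y op => applyOp op Y) t := by
  induction ops generalizing s t with
  | nil => exact hst
  | cons op ops ih => exact ih _ _ (applyOp_mono op hst)
end

section
/- Let d ≥ 1 and let C = I_1 × ⋯ × I_d be a hypercube in [−∞, ∞]^d, where each I_i = [I_i^−, I_i^+] is a compact interval of the extended real line. Equip [−∞, ∞]^d with the coordinatewise partial order (x ≤ y iff x_i ≤ y_i for all i) and the product topology. Let g_n, g : C → ℝ be functions such that g_n(x) → g(x) as n → ∞ for every x ∈ C, such that each g_n is monotone (x ≤ y implies g_n(x) ≤ g_n(y)), and such that g is continuous on C. Then sup_{x ∈ C} |g_n(x) − g(x)| → 0 as n → ∞. -/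
open Filter

/-- **convergence of monotone functions, Lemma 2.9.**
Let `d ≥ 1` and let `C = [lo 1, hi 1] × ⋯ × [lo d, hi d]` be a hypercube
in `[−∞, ∞]^d` (with the coordinatewise order, `C = Set.Icc lo hi`).
If `g n → g∞` pointwise on `C`, each `g n` is monotone on `C` (for the
coordinatewise order) and `g∞` is continuous on `C`, then
`sup_{x ∈ C} |g n x − g∞ x| → 0`. -/
theorem tendstoUniformly_of_monotone_of_continuous
    (d : ℕ) (hd : 1 ≤ d) (lo hi : Fin d → EReal)
    (g : ℕ → (Fin d → EReal) → ℝ) (glim : (Fin d → EReal) → ℝ)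
    (hmono : ∀ n : ℕ, ∀ x ∈ Set.Icc lo hi, ∀ y ∈ Set.Icc lo hi, x ≤ y → g n x ≤ g n y)
    (hptwise : ∀ x ∈ Set.Icc lo hi, Tendsto (fun n => g n x) atTop (nhds (glim x)))
    (hcont : ContinuousOn glim (Set.Icc lo hi)) :
    Tendsto (fun n => ⨆ x ∈ Set.Icc lo hi, |g n x - glim x|) atTop (nhds 0) := by
  set C := Set.Icc lo hi with hCdef
  -- the limit is monotone on C
  have hglim_mono : ∀ x ∈ C, ∀ y ∈ C, x ≤ y → glim x ≤ glim y := fun x hx y hy hxy =>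
    le_of_tendsto_of_tendsto' (hptwise x hx) (hptwise y hy) (fun n => hmono n x hx y hy hxy)
  rw [NormedAddCommGroup.tendsto_nhds_zero]
  intro ε hε
  -- Key: around each point of C there is an order box, neighborhood within C,
  -- with corners in C, on which glim varies by at most ε/2.
  have key : ∀ x ∈ C, ∃ a b O : _, a ∈ C ∧ b ∈ C ∧ a ≤ x ∧ x ≤ b ∧
      glim b - glim a ≤ ε / 2 ∧ IsOpen O ∧ x ∈ O ∧ O ∩ C ⊆ Set.Icc a b := by
    intro x hx
    have hball : glim ⁻¹' Metric.ball (glim x) (ε / 4) ∈ nhdsWithin x C :=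
      hcont x hx (Metric.ball_mem_nhds _ (by positivity))
    rw [mem_nhdsWithin] at hball
    obtain ⟨O, hOopen, hxO, hOsub⟩ := hball
    have hOnhds : O ∈ nhds x := hOopen.mem_nhds hxO
    rw [nhds_pi, Filter.mem_pi] at hOnhds
    obtain ⟨I, _, t, ht, htsub⟩ := hOnhds
    choose a b hxab habnhds habsub using fun i => exists_Icc_mem_subset_of_mem_nhds (ht i)
    set a' : Fin d → EReal := fun i => max (lo i) (a i) with ha'
    set b' : Fin d → EReal := fun i => min (hi i) (b i) with hb'
    have ha'x : a' ≤ x := fun i => max_le (hx.1 i) (hxab i).1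
    have hxb' : x ≤ b' := fun i => le_min (hx.2 i) (hxab i).2
    have ha'C : a' ∈ C := ⟨fun i => le_max_left _ _, le_trans ha'x hx.2⟩
    have hb'C : b' ∈ C := ⟨le_trans hx.1 hxb', fun i => min_le_left _ _⟩
    -- the full box is inside O
    have hboxO : Set.pi Set.univ (fun i => Set.Icc (a i) (b i)) ⊆ O := by
      refine subset_trans ?_ htsub
      intro y hy i _
      exact habsub i (hy i (Set.mem_univ i))
    have ha'box : a' ∈ Set.pi Set.univ fun i => Set.Icc (a i) (b i) := by
      intro i _
      exact ⟨le_max_right _ _, max_le ((hx.1 i).trans (hxab i).2)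
        ((hxab i).1.trans (hxab i).2)⟩
    have hb'box : b' ∈ Set.pi Set.univ fun i => Set.Icc (a i) (b i) := by
      intro i _
      exact ⟨le_trans (hxab i).1 (le_min (hx.2 i) (hxab i).2), min_le_right _ _⟩
    have ha'ball : glim a' ∈ Metric.ball (glim x) (ε / 4) :=
      hOsub ⟨hboxO ha'box, ha'C⟩
    have hb'ball : glim b' ∈ Metric.ball (glim x) (ε / 4) :=
      hOsub ⟨hboxO hb'box, hb'C⟩
    rw [Metric.mem_ball, Real.dist_eq] at ha'ball hb'ball
    refine ⟨a', b', O ∩ interior (Set.pi Set.univ fun i => Set.Icc (a i) (b i)),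
      ha'C, hb'C, ha'x, hxb', by
        rw [abs_lt] at ha'ball hb'ball; linarith,
      hOopen.inter isOpen_interior, ?_, ?_⟩
    · refine ⟨hxO, ?_⟩
      rw [mem_interior_iff_mem_nhds]
      exact set_pi_mem_nhds Set.finite_univ (fun i _ => habnhds i)
    · rintro y ⟨⟨-, hy2⟩, hyC⟩
      have hybox := interior_subset hy2
      exact ⟨fun i => max_le (hyC.1 i) (hybox i (Set.mem_univ i)).1,
        fun i => le_min (hyC.2 i) (hybox i (Set.mem_univ i)).2⟩
  choose! a b O haC hbC hax hxb hvar hOopen hxO hOsub using key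
  -- compactness: finite subcover
  have hCcompact : IsCompact C := isClosed_Icc.isCompact
  obtain ⟨T, hTcover⟩ := hCcompact.elim_nhds_subcover' (fun x hx => O x)
    (fun x hx => (hOopen x hx).mem_nhds (hxO x hx))
  -- eventually, g n is close to glim at all corners
  have hev : ∀ᶠ n in atTop, ∀ z ∈ T, |g n (a z) - glim (a z)| < ε / 4 ∧
      |g n (b z) - glim (b z)| < ε / 4 := by
    rw [Filter.eventually_all_finset]
    intro z hz
    have h1 := (hptwise (a z) (haC z z.2)).eventually
      (Metric.ball_mem_nhds (glim (a (z : Fin d → EReal))) (by positivity : (0:ℝ) < ε / 4))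
    have h2 := (hptwise (b z) (hbC z z.2)).eventually
      (Metric.ball_mem_nhds (glim (b (z : Fin d → EReal))) (by positivity : (0:ℝ) < ε / 4))
    filter_upwards [h1, h2] with n hn1 hn2
    rw [Real.dist_eq] at hn1 hn2
    exact ⟨hn1, hn2⟩
  filter_upwards [hev] with n hn
  -- bound the sup
  have hbound : ∀ x ∈ C, |g n x - glim x| ≤ 3 * ε / 4 := by
    intro x hx
    obtain ⟨z, hzT⟩ := Set.mem_iUnion₂.mp (hTcover hx)
    obtain ⟨hzT, hxOz⟩ := hzT
    have hxbox : x ∈ Set.Icc (a z) (b z) := hOsub z z.2 ⟨hxOz, hx⟩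
    have haz := haC z z.2
    have hbz := hbC z z.2
    obtain ⟨hga, hgb⟩ := hn z hzT
    rw [abs_lt] at hga hgb
    have h1 : g n x ≤ g n (b z) := hmono n x hx (b z) hbz hxbox.2
    have h2 : g n (a z) ≤ g n x := hmono n (a z) haz x hx hxbox.1
    have h3 : glim (a z) ≤ glim x := hglim_mono (a z) haz x hx hxbox.1
    have h4 : glim x ≤ glim (b z) := hglim_mono x hx (b z) hbz hxbox.2
    have h5 := hvar z z.2
    rw [abs_le]
    constructor <;> linarith
  have hsup_le : (⨆ x ∈ C, |g n x - glim x|) ≤ 3 * ε / 4 := by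
    refine Real.iSup_le (fun x => Real.iSup_le (fun hx => hbound x hx) (by positivity))
      (by positivity)
  have hsup_nonneg : 0 ≤ ⨆ x ∈ C, |g n x - glim x| :=
    Real.iSup_nonneg fun x => Real.iSup_nonneg fun _ => abs_nonneg _
  rw [Real.norm_eq_abs, abs_of_nonneg hsup_nonneg]
  linarith
end

section
/- Let T > 0, δ ∈ (0,1) and r ≥ 1, and set t = δ^{−2}T. Let X and Y be independent random variables with X Poisson distributed with mean t and Y Poisson distributed with mean (1−δ)t. Then E[min(1, (1−δ)^{X−Y})] ≤ exp(−(T − r·√(2T))) + r^{−2}, where (1−δ)^{X−Y} denotes the integer power of the real number 1−δ ∈ (0,1) with (possibly negative) integer exponent X − Y. -/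
/-!
Write `t = T / δ²`. The difference `X - Y` of the independent Poisson variables has mean
`δ t = T / δ` and variance `(2 - δ) t ≤ 2T / δ²` (the Poisson moments follow from the Stein–Chen
identity), so by Chebyshev `δ (X - Y) > T - r √(2T)` outside an event of probability at most
`r⁻²`. Since `1 - δ ≤ e^{-δ}`, `min 1 ((1 - δ) ^ z) ≤ e^{-δ z}` for every integer `z`, which bounds
the integrand by `exp (-(T - r √(2T)))` off that event and by `1` on it.
-/

open MeasureTheory ProbabilityTheory
open Real
open scoped NNReal Nat

namespace ProbabilityTheory

lemma poisson_weight_succ_mul (r : ℝ≥0) (n : ℕ) :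
    exp (-r) * r ^ (n + 1) / (n + 1)! * (n + 1) = r * (exp (-r) * r ^ n / n !) := by
  rw [Nat.factorial_succ, Nat.cast_mul, pow_succ]
  field_simp
  push_cast
  ring

/-- The Stein–Chen identity `E[N f(N)] = r E[f(N + 1)]` for `N ~ Po(r)`. -/
lemma HasSum.poisson_mul_natCast_mul {r : ℝ≥0} {f : ℕ → ℝ} {s : ℝ}
    (hf : HasSum (fun n ↦ exp (-r) * r ^ n / n ! * f (n + 1)) s) :
    HasSum (fun n ↦ exp (-r) * r ^ n / n ! * (n * f n)) (r * s) := by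
  rw [← hasSum_nat_add_iff' 1, Finset.sum_range_one, Nat.cast_zero, zero_mul, mul_zero, sub_zero]
  refine (hf.mul_left (r : ℝ)).congr_fun fun n ↦ ?_
  push_cast
  rw [← mul_assoc, ← mul_assoc, poisson_weight_succ_mul, mul_assoc]

lemma hasSum_poisson_mul_natCast (r : ℝ≥0) :
    HasSum (fun n ↦ exp (-r) * r ^ n / n ! * n) r := by
  simpa using ((hasSum_one_poissonMeasure r).mul_right 1).poisson_mul_natCast_mul (f := 1)

lemma hasSum_poisson_mul_natCast_sq (r : ℝ≥0) :
    HasSum (fun n ↦ exp (-r) * r ^ n / n ! * n ^ 2) (r + r ^ 2) := by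
  have h : HasSum (fun n ↦ exp (-r) * r ^ n / n ! * ((n + 1 : ℕ) : ℝ)) (r + 1) := by
    convert (hasSum_poisson_mul_natCast r).add (hasSum_one_poissonMeasure r) using 2 with n
    push_cast
    ring
  convert h.poisson_mul_natCast_mul using 1
  · ext n; ring
  · ring

lemma integrable_map_cast_poissonMeasure_of_hasSum {r : ℝ≥0} {f : ℝ → ℝ} {s : ℝ}
    (hfm : Measurable f) (hf : 0 ≤ f) (h : HasSum (fun n ↦ exp (-r) * r ^ n / n ! * f n) s) :
    Integrable f Po(ℝ, r) := by
  rw [integrable_map_measure hfm.aestronglyMeasurable .of_discrete, integrable_poissonMeasure_iff]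
  simpa [Real.norm_of_nonneg (hf _)] using h.summable

lemma integral_map_cast_poissonMeasure_of_hasSum {r : ℝ≥0} {f : ℝ → ℝ} {s : ℝ}
    (hfm : Measurable f) (h : HasSum (fun n ↦ exp (-r) * r ^ n / n ! * f n) s) :
    ∫ x, f x ∂Po(ℝ, r) = s := by
  rw [integral_map .of_discrete hfm.aestronglyMeasurable, integral_poissonMeasure, ← h.tsum_eq]
  rfl

lemma memLp_id_map_cast_poissonMeasure (r : ℝ≥0) : MemLp id 2 Po(ℝ, r) :=
  (memLp_two_iff_integrable_sq aestronglyMeasurable_id).2 <|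
    integrable_map_cast_poissonMeasure_of_hasSum (measurable_id.pow_const 2) (fun x ↦ sq_nonneg x)
      (hasSum_poisson_mul_natCast_sq r)

lemma integral_id_map_cast_poissonMeasure (r : ℝ≥0) : ∫ x, x ∂Po(ℝ, r) = r :=
  integral_map_cast_poissonMeasure_of_hasSum (f := id) measurable_id (hasSum_poisson_mul_natCast r)

lemma variance_id_map_cast_poissonMeasure (r : ℝ≥0) : Var[id; Po(ℝ, r)] = r := by
  rw [variance_eq_sub (memLp_id_map_cast_poissonMeasure r)]
  have h2 := integral_map_cast_poissonMeasure_of_hasSum (f := fun x ↦ x ^ 2)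
    (measurable_id.pow_const 2) (hasSum_poisson_mul_natCast_sq r)
  simp only [Pi.pow_apply, id_eq, h2, integral_id_map_cast_poissonMeasure]
  ring

lemma hasLaw_natCast_of_map_eq_poissonMeasure {Ω : Type*} [MeasurableSpace Ω] {P : Measure Ω}
    {X : Ω → ℕ} {r : ℝ≥0} (hX : P.map X = Po(r)) : HasLaw (fun ω ↦ (X ω : ℝ)) Po(ℝ, r) P :=
  HasLaw.comp (X := X) ⟨Measurable.of_discrete.aemeasurable, rfl⟩
    ⟨.of_map_ne_zero (hX ▸ IsProbabilityMeasure.ne_zero _), hX⟩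

section DifferenceOfPoisson

variable {Ω : Type*} [MeasurableSpace Ω] {P : Measure Ω} {X Y : Ω → ℝ} {a b : ℝ≥0}

lemma HasLaw.memLp_map_cast_poissonMeasure (hX : HasLaw X Po(ℝ, a) P) : MemLp X 2 P := by
  have h := memLp_id_map_cast_poissonMeasure a
  rwa [← hX.map_eq, memLp_map_measure_iff aestronglyMeasurable_id hX.aemeasurable] at h

variable [IsProbabilityMeasure P]

lemma integral_sub_of_hasLaw_poisson (hX : HasLaw X Po(ℝ, a) P) (hY : HasLaw Y Po(ℝ, b) P) :
    P[X - Y] = (a : ℝ) - b := by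
  rw [integral_sub' (hX.memLp_map_cast_poissonMeasure.integrable one_le_two)
    (hY.memLp_map_cast_poissonMeasure.integrable one_le_two), hX.integral_eq, hY.integral_eq,
    integral_id_map_cast_poissonMeasure, integral_id_map_cast_poissonMeasure]

lemma IndepFun.variance_sub_of_hasLaw_poisson (hXY : IndepFun X Y P)
    (hX : HasLaw X Po(ℝ, a) P) (hY : HasLaw Y Po(ℝ, b) P) : Var[X - Y; P] = a + b := by
  have hX2 := hX.memLp_map_cast_poissonMeasure
  have hY2 := hY.memLp_map_cast_poissonMeasure
  rw [variance_sub hX2 hY2, hXY.covariance_eq_zero hX2 hY2, hX.variance_eq, hY.variance_eq,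
    variance_id_map_cast_poissonMeasure, variance_id_map_cast_poissonMeasure]
  ring

lemma IndepFun.measureReal_le_abs_sub_poisson (hXY : IndepFun X Y P)
    (hX : HasLaw X Po(ℝ, a) P) (hY : HasLaw Y Po(ℝ, b) P) {c : ℝ} (hc : 0 < c) :
    P.real {ω | c ≤ |X ω - Y ω - (a - b)|} ≤ (a + b) / c ^ 2 := by
  have h := meas_ge_le_variance_div_sq
    (hX.memLp_map_cast_poissonMeasure.sub hY.memLp_map_cast_poissonMeasure) hc
  rw [integral_sub_of_hasLaw_poisson hX hY, hXY.variance_sub_of_hasLaw_poisson hX hY] at h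
  exact ENNReal.toReal_le_of_le_ofReal (by positivity) h

end DifferenceOfPoisson

end ProbabilityTheory

lemma min_one_zpow_le_exp_neg_mul {δ : ℝ} (h0 : 0 ≤ δ) (h1 : δ ≤ 1) (z : ℤ) :
    min 1 ((1 - δ) ^ z) ≤ exp (-(δ * z)) := by
  obtain ⟨n, rfl | rfl⟩ := Int.eq_nat_or_neg z
  · calc min 1 ((1 - δ) ^ (n : ℤ)) ≤ (1 - δ) ^ n := by rw [zpow_natCast]; exact min_le_right _ _
      _ ≤ exp (-δ) ^ n := pow_le_pow_left₀ (by linarith) (by linarith [add_one_le_exp (-δ)]) n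
      _ = exp (-(δ * n)) := by rw [← exp_nat_mul]; ring_nf
  · calc min 1 ((1 - δ) ^ (-(n : ℤ))) ≤ 1 := min_le_left _ _
      _ ≤ exp (-(δ * ((-(n : ℤ) : ℤ) : ℝ))) := by
        rw [one_le_exp_iff]; push_cast; nlinarith [n.cast_nonneg (α := ℝ)]

lemma integral_le_add_measureReal_of_forall_notMem {Ω : Type*} [MeasurableSpace Ω]
    {P : Measure Ω} [IsProbabilityMeasure P] {F : Ω → ℝ} {S : Set Ω} {b : ℝ} (hb : 0 ≤ b)
    (hF : ∀ ω, F ω ≤ 1) (hFS : ∀ ω ∉ S, F ω ≤ b) : ∫ ω, F ω ∂P ≤ b + P.real S := by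
  by_cases hFi : Integrable F P
  swap
  · rw [integral_undef hFi]; positivity
  set S' := toMeasurable P S
  have hle : ∀ ω, F ω ≤ b + S'.indicator (1 : Ω → ℝ) ω := by
    intro ω
    by_cases hω : ω ∈ S'
    · simp only [Set.indicator_of_mem hω, Pi.one_apply]; linarith [hF ω]
    · simpa [Set.indicator_of_notMem hω] using hFS ω fun h ↦ hω (subset_toMeasurable P S h)
  have hS'i : Integrable (S'.indicator (1 : Ω → ℝ)) P :=
    (integrable_const 1).indicator (measurableSet_toMeasurable P S)
  calc ∫ ω, F ω ∂P ≤ ∫ ω, b + S'.indicator (1 : Ω → ℝ) ω ∂P :=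
        integral_mono hFi ((integrable_const b).add hS'i) hle
    _ = b + P.real S := by
        rw [integral_add (integrable_const b) hS'i, integral_indicator_one
          (measurableSet_toMeasurable P S), measureReal_def, measure_toMeasurable]
        simp [measureReal_def]

lemma chebyshev_ratio_le {T δ r : ℝ} (hT : 0 < T) (hδ : 0 < δ) (hr : 0 < r) :
    ((δ ^ 2)⁻¹ * T + (1 - δ) * ((δ ^ 2)⁻¹ * T)) / (r * √(2 * T) / δ) ^ 2 ≤ r⁻¹ ^ 2 := by
  rw [div_pow, mul_pow, sq_sqrt (by positivity)]
  field_simp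
  nlinarith [mul_pos (mul_pos hδ (by positivity : (0 : ℝ) < r ^ 2)) hT]

/-- **key estimate in Lemma 2.6.** Let `T > 0`, `δ ∈ (0,1)`,
`r ≥ 1`, and `t = δ⁻² T`. Let `X, Y` be independent random variables with
`X` Poisson distributed with mean `t` and `Y` Poisson distributed with
mean `(1−δ) t`. Then
`E[min(1, (1−δ)^(X−Y))] ≤ exp(−(T − r √(2T))) + r⁻²`,
where `(1−δ)^(X−Y)` is an integer (possibly negative) power of `1−δ`. -/
theorem poisson_hitting_estimate
    {Ω : Type*} [MeasurableSpace Ω] (P : Measure Ω) [IsProbabilityMeasure P]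
    (T δ r : ℝ) (hT : 0 < T) (hδ : δ ∈ Set.Ioo (0 : ℝ) 1) (hr : 1 ≤ r)
    (X Y : Ω → ℕ) (hXY : IndepFun X Y P)
    (hX : Measure.map X P = poissonMeasure (Real.toNNReal ((δ ^ 2)⁻¹ * T)))
    (hY : Measure.map Y P = poissonMeasure (Real.toNNReal ((1 - δ) * ((δ ^ 2)⁻¹ * T)))) :
    ∫ ω, min 1 ((1 - δ) ^ ((X ω : ℤ) - (Y ω : ℤ))) ∂P
      ≤ Real.exp (-(T - r * Real.sqrt (2 * T))) + r⁻¹ ^ 2 := by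
  obtain ⟨hδ0, hδ1⟩ := hδ
  set t := (δ ^ 2)⁻¹ * T with ht
  set c := r * √(2 * T) / δ with hc
  have hS := (hXY.comp measurable_from_top measurable_from_top).measureReal_le_abs_sub_poisson
    (hasLaw_natCast_of_map_eq_poissonMeasure hX) (hasLaw_natCast_of_map_eq_poissonMeasure hY)
    (by positivity : 0 < c)
  rw [coe_toNNReal _ (by positivity),
    coe_toNNReal _ (mul_nonneg (by linarith) (by positivity))] at hS
  have hδt : δ * (δ * t) = T := by rw [ht]; field_simp
  have hδc : δ * c = r * √(2 * T) := by rw [hc]; field_simp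
  calc ∫ ω, min 1 ((1 - δ) ^ ((X ω : ℤ) - (Y ω : ℤ))) ∂P
      ≤ exp (-(T - r * √(2 * T))) + P.real {ω | c ≤ |X ω - Y ω - (t - (1 - δ) * t)|} := by
        refine integral_le_add_measureReal_of_forall_notMem (exp_pos _).le
          (fun ω ↦ min_le_left _ _) fun ω hω ↦ ?_
        refine (min_one_zpow_le_exp_neg_mul hδ0.le hδ1.le _).trans (exp_le_exp.2 ?_)
        rw [Set.mem_ofPred_eq, not_le, abs_lt] at hω
        push_cast
        nlinarith [hω.1]
    _ ≤ exp (-(T - r * √(2 * T))) + r⁻¹ ^ 2 := by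
        gcongr
        exact hS.trans (chebyshev_ratio_le hT hδ0 (by linarith))
end

section
/- For T > 0 and δ ∈ (0,1), let X_{δ,T} and Y_{δ,T} be independent random variables with X_{δ,T} Poisson distributed with mean δ^{−2}T and Y_{δ,T} Poisson distributed with mean (1−δ)δ^{−2}T. Then lim_{T→∞} sup_{δ ∈ (0,1)} E[min(1, (1−δ)^{X_{δ,T} − Y_{δ,T}})] = 0, where (1−δ)^{X−Y} denotes the integer power of the real number 1−δ ∈ (0,1) with (possibly negative) integer exponent X − Y. -/
open MeasureTheory ProbabilityTheory Filter Real
open scoped NNReal Nat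

/-!
Since `min 1 (b ^ 2) ≤ b` for `b ≥ 0`, the integrand is at most `a ^ (X - Y)` with `a = √(1 - δ)`.
The exponential moments of Poisson variables give
`E[a ^ (X - Y)] = exp (r (a - 1) + (1 - δ) r (a⁻¹ - 1)) = exp (-r (1 - a) ^ 2)` for `r = δ⁻² T`,
and `1 - a ≥ δ / 2`, so the expectation is at most `exp (-T / 4)` uniformly in `δ`.
-/

lemma hasSum_poissonMeasure_mul_pow (r : ℝ≥0) (c : ℝ) :
    HasSum (fun n : ℕ => exp (-r) * r ^ n / n ! * c ^ n) (exp (r * (c - 1))) := by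
  have h := (NormedSpace.expSeries_div_hasSum_exp (c * r : ℝ)).mul_left (exp (-r))
  rw [← exp_eq_exp_ℝ, ← exp_add] at h
  convert! h using 2 with n <;> ring

lemma integrable_pow_poissonMeasure (r : ℝ≥0) (c : ℝ) :
    Integrable (fun n : ℕ => c ^ n) (poissonMeasure r) := by
  rw [integrable_poissonMeasure_iff]
  simpa only [norm_pow, norm_eq_abs] using (hasSum_poissonMeasure_mul_pow r |c|).summable

lemma integral_pow_poissonMeasure (r : ℝ≥0) (c : ℝ) :
    ∫ n, c ^ n ∂poissonMeasure r = exp (r * (c - 1)) := by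
  simpa only [integral_poissonMeasure, smul_eq_mul] using
    (hasSum_poissonMeasure_mul_pow r c).tsum_eq

lemma min_one_sq_le {x : ℝ} (hx : 0 ≤ x) : min 1 (x ^ 2) ≤ x := by
  rcases le_total x 1 with h | h
  · exact min_le_of_right_le (by nlinarith)
  · exact min_le_of_left_le h

lemma half_le_one_sub_sqrt_one_sub {δ : ℝ} (hδ : δ ≤ 2) : δ / 2 ≤ 1 - √(1 - δ) := by
  have : √(1 - δ) ≤ 1 - δ / 2 := Real.sqrt_le_iff.2 ⟨by linarith, by nlinarith [sq_nonneg δ]⟩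
  linarith

section PoissonDifference

variable {Ω : Type*} [MeasurableSpace Ω] {P : Measure Ω} {X Y : Ω → ℕ} {r s : ℝ≥0}

lemma hasLaw_of_map_eq {𝓧 : Type*} [MeasurableSpace 𝓧] {μ : Measure 𝓧} [NeZero μ] {Z : Ω → 𝓧}
    (h : P.map Z = μ) : HasLaw Z μ P :=
  ⟨.of_map_ne_zero (h ▸ NeZero.ne μ), h⟩

lemma integrable_pow_of_hasLaw_poissonMeasure (hX : HasLaw X (poissonMeasure r) P) (c : ℝ) :
    Integrable (fun ω => c ^ X ω) P :=
  (integrable_map_measure .of_discrete hX.aemeasurable).1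
    (hX.map_eq ▸ integrable_pow_poissonMeasure r c)

lemma integral_pow_of_hasLaw_poissonMeasure (hX : HasLaw X (poissonMeasure r) P) (c : ℝ) :
    ∫ ω, c ^ X ω ∂P = exp (r * (c - 1)) :=
  (hX.integral_comp (f := fun n : ℕ => c ^ n) .of_discrete).trans (integral_pow_poissonMeasure r c)

lemma integrable_zpow_sub_of_indepFun_poissonMeasure (hX : HasLaw X (poissonMeasure r) P)
    (hY : HasLaw Y (poissonMeasure s) P) (hXY : IndepFun X Y P) {a : ℝ} (ha : a ≠ 0) :
    Integrable (fun ω => a ^ ((X ω : ℤ) - Y ω)) P := by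
  simp only [zpow_natCast_sub_natCast₀ ha, div_eq_mul_inv, ← inv_pow]
  exact (hXY.comp measurable_from_nat measurable_from_nat).integrable_mul
    (integrable_pow_of_hasLaw_poissonMeasure hX a)
    (integrable_pow_of_hasLaw_poissonMeasure hY a⁻¹)

lemma integral_zpow_sub_of_indepFun_poissonMeasure (hX : HasLaw X (poissonMeasure r) P)
    (hY : HasLaw Y (poissonMeasure s) P) (hXY : IndepFun X Y P) {a : ℝ} (ha : a ≠ 0) :
    ∫ ω, a ^ ((X ω : ℤ) - Y ω) ∂P = exp (r * (a - 1) + s * (a⁻¹ - 1)) := by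
  simp only [zpow_natCast_sub_natCast₀ ha, div_eq_mul_inv, ← inv_pow]
  rw [exp_add, ← integral_pow_of_hasLaw_poissonMeasure hX,
    ← integral_pow_of_hasLaw_poissonMeasure hY]
  exact (hXY.comp measurable_from_nat measurable_from_nat).integral_fun_mul_eq_mul_integral
    (integrable_pow_of_hasLaw_poissonMeasure hX a).aestronglyMeasurable
    (integrable_pow_of_hasLaw_poissonMeasure hY a⁻¹).aestronglyMeasurable

lemma integral_min_one_zpow_sub_le {δ r : ℝ} (hδ : δ ∈ Set.Ioo (0 : ℝ) 1) (hr : 0 ≤ r)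
    (hX : HasLaw X (poissonMeasure r.toNNReal) P)
    (hY : HasLaw Y (poissonMeasure ((1 - δ) * r).toNNReal) P) (hXY : IndepFun X Y P) :
    ∫ ω, min 1 ((1 - δ) ^ ((X ω : ℤ) - Y ω)) ∂P ≤ exp (-(r * δ ^ 2 / 4)) := by
  -- `a` minimises `r (a - 1) + (1 - δ) r (a⁻¹ - 1)`
  set a := √(1 - δ)
  have ha : 0 < a := Real.sqrt_pos.2 (by linarith [hδ.2])
  have ha_sq : a ^ 2 = 1 - δ := Real.sq_sqrt (by linarith [hδ.2])
  have hnonneg : ∀ ω, 0 ≤ min 1 ((1 - δ) ^ ((X ω : ℤ) - Y ω)) := fun ω =>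
    le_min zero_le_one (zpow_pos (by linarith [hδ.2]) _).le
  have hpoint : ∀ ω, min 1 ((1 - δ) ^ ((X ω : ℤ) - Y ω)) ≤ a ^ ((X ω : ℤ) - Y ω) := fun ω => by
    rw [← ha_sq, ← zpow_natCast, ← zpow_mul, mul_comm, zpow_mul, zpow_natCast]
    exact min_one_sq_le (zpow_pos ha _).le
  have hmoment := integral_zpow_sub_of_indepFun_poissonMeasure hX hY hXY ha.ne'
  rw [Real.coe_toNNReal _ hr, Real.coe_toNNReal _ (by nlinarith [hδ.2])] at hmoment
  calc ∫ ω, min 1 ((1 - δ) ^ ((X ω : ℤ) - Y ω)) ∂P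
      ≤ ∫ ω, a ^ ((X ω : ℤ) - Y ω) ∂P :=
        integral_mono_of_nonneg (.of_forall hnonneg)
          (integrable_zpow_sub_of_indepFun_poissonMeasure hX hY hXY ha.ne') (.of_forall hpoint)
    _ = exp (-(r * (1 - a) ^ 2)) := by
        rw [hmoment, ← ha_sq]
        congr 1
        field_simp
        ring
    _ ≤ exp (-(r * δ ^ 2 / 4)) := by
        have hgap : δ / 2 ≤ 1 - a := half_le_one_sub_sqrt_one_sub (by linarith [hδ.2])
        have hsq : (δ / 2) ^ 2 ≤ (1 - a) ^ 2 := pow_le_pow_left₀ (by linarith [hδ.1]) hgap 2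
        gcongr
        nlinarith [mul_le_mul_of_nonneg_left hsq hr]

end PoissonDifference

theorem poisson_hitting_sup_tendsto_zero_general
    {Ω : Type*} [MeasurableSpace Ω] (P : Measure Ω)
    (X Y : ℝ → ℝ → Ω → ℕ)
    (hXY : ∀ δ ∈ Set.Ioo (0 : ℝ) 1, ∀ T ∈ Set.Ioi (0 : ℝ),
      IndepFun (X δ T) (Y δ T) P ∧
      Measure.map (X δ T) P = poissonMeasure (Real.toNNReal ((δ ^ 2)⁻¹ * T)) ∧
      Measure.map (Y δ T) P = poissonMeasure (Real.toNNReal ((1 - δ) * ((δ ^ 2)⁻¹ * T)))) :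
    Tendsto
      (fun T : ℝ => ⨆ δ ∈ Set.Ioo (0 : ℝ) 1,
        ∫ ω, min 1 ((1 - δ) ^ ((X δ T ω : ℤ) - (Y δ T ω : ℤ))) ∂P)
      atTop (nhds 0) := by
  have hbound : ∀ T > 0, ∀ δ ∈ Set.Ioo (0 : ℝ) 1,
      ∫ ω, min 1 ((1 - δ) ^ ((X δ T ω : ℤ) - (Y δ T ω : ℤ))) ∂P ≤ exp (-(T / 4)) := by
    intro T hT δ hδ
    obtain ⟨hind, hX, hY⟩ := hXY δ hδ T hT
    convert integral_min_one_zpow_sub_le hδ (by positivity) (hasLaw_of_map_eq hX)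
      (hasLaw_of_map_eq hY) hind using 3
    field_simp [hδ.1.ne']
  have hexp : Tendsto (fun T : ℝ => exp (-(T / 4))) atTop (nhds 0) :=
    tendsto_exp_atBot.comp (tendsto_neg_atTop_atBot.comp (tendsto_id.atTop_div_const (by norm_num)))
  refine squeeze_zero' (.of_forall fun T => ?_) ?_ hexp
  · refine Real.iSup_nonneg fun δ => Real.iSup_nonneg fun hδ => integral_nonneg fun ω => ?_
    exact le_min zero_le_one (zpow_pos (by linarith [hδ.2]) _).le
  · filter_upwards [eventually_gt_atTop 0] with T hT
    exact Real.iSup_le (fun δ => Real.iSup_le (hbound T hT δ) (exp_pos _).le) (exp_pos _).le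

/-- **display (2.32), Lemma 2.6.** For `T > 0` and
`δ ∈ (0,1)`, let `X δ T` and `Y δ T` be independent random variables,
`X δ T` Poisson with mean `δ⁻² T` and `Y δ T` Poisson with mean
`(1−δ) δ⁻² T`. Then
`lim_{T→∞} sup_{δ ∈ (0,1)} E[min(1, (1−δ)^(X δ T − Y δ T))] = 0`,
where `(1−δ)^(X−Y)` is an integer (possibly negative) power of `1−δ`. -/
theorem poisson_hitting_sup_tendsto_zero
    {Ω : Type*} [MeasurableSpace Ω] (P : Measure Ω) [IsProbabilityMeasure P]
    (X Y : ℝ → ℝ → Ω → ℕ)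
    (hXY : ∀ δ ∈ Set.Ioo (0 : ℝ) 1, ∀ T ∈ Set.Ioi (0 : ℝ),
      IndepFun (X δ T) (Y δ T) P ∧
      Measure.map (X δ T) P = poissonMeasure (Real.toNNReal ((δ ^ 2)⁻¹ * T)) ∧
      Measure.map (Y δ T) P = poissonMeasure (Real.toNNReal ((1 - δ) * ((δ ^ 2)⁻¹ * T)))) :
    Tendsto
      (fun T : ℝ => ⨆ δ ∈ Set.Ioo (0 : ℝ) 1,
        ∫ ω, min 1 ((1 - δ) ^ ((X δ T ω : ℤ) - (Y δ T ω : ℤ))) ∂P)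
      atTop (nhds 0) :=
  poisson_hitting_sup_tendsto_zero_general P X Y hXY
end
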